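/- For the unit ball b_1^m of ℓ_1^m viewed as a subset of ℓ_2^m with n ≤ m, the Kolmogorov n-width satisfies d_n(b_1^m, ℓ_2^m) = √(1 − n/m). -/

import Mathlib

/-!
If `p` is the orthogonal projection onto `Z`, then `dist(eᵢ, Z)² = 1 - ⟪eᵢ, p eᵢ⟫`, and the diagonal
entries `⟪eᵢ, p eᵢ⟫` sum to `trace p = dim Z`. So for `dim Z ≤ n` some `eᵢ`, a point of the
`ℓ₁` ball, is at distance at least `√(1 - n/m)` from `Z`. Conversely, every point of the `ℓ₁` ball
is a combination `∑ xᵢ eᵢ` with `∑ |xᵢ| ≤ 1`, so it suffices to find a rank `n` orthogonal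
projection with constant diagonal `n/m`. Take `m⁻¹ FᴴF`, where the rows of `F` are the characters
`j ↦ exp(2πi kj/m)` for `k` in a set `T ⊆ ℤ/m` of size `n` closed under negation: orthogonality of
characters makes it a projection, and the symmetry of `T` makes it real.
-/

open scoped ENNReal

/-- Kolmogorov n-width. -/
noncomputable def kolWidth {Y : Type*} [NormedAddCommGroup Y] [NormedSpace ℝ Y]
    (n : ℕ) (H : Set Y) : ℝ≥0∞ :=
  ⨅ (Z : Submodule ℝ Y) (_ : FiniteDimensional ℝ Z ∧ Module.finrank ℝ Z ≤ n),
    ⨆ x ∈ H, ⨅ z ∈ (Z : Set Y), edist x z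

open Module Finset
open scoped InnerProductSpace

section KolmogorovWidth

variable {Y : Type*} [NormedAddCommGroup Y] [NormedSpace ℝ Y] {n : ℕ} {H : Set Y} {r : ℝ}

theorem kolWidth_le_ofReal (Z : Submodule ℝ Y) [FiniteDimensional ℝ Z] (hZ : finrank ℝ Z ≤ n)
    (hH : ∀ x ∈ H, ∃ z ∈ Z, ‖x - z‖ ≤ r) : kolWidth n H ≤ ENNReal.ofReal r := by
  refine iInf₂_le_of_le Z ⟨inferInstance, hZ⟩ (iSup₂_le fun x hx => ?_)
  obtain ⟨z, hz, hxz⟩ := hH x hx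
  refine iInf₂_le_of_le z hz ?_
  rw [edist_dist, dist_eq_norm]
  exact ENNReal.ofReal_le_ofReal hxz

theorem ofReal_le_kolWidth
    (hH : ∀ Z : Submodule ℝ Y, FiniteDimensional ℝ Z → finrank ℝ Z ≤ n →
      ∃ x ∈ H, ∀ z ∈ Z, r ≤ ‖x - z‖) :
    ENNReal.ofReal r ≤ kolWidth n H := by
  refine le_iInf₂ fun Z hZ => ?_
  obtain ⟨x, hx, hxZ⟩ := hH Z hZ.1 hZ.2
  refine le_iSup₂_of_le x hx (le_iInf₂ fun z hz => ?_)
  rw [edist_dist, dist_eq_norm]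
  exact ENNReal.ofReal_le_ofReal (hxZ z hz)

end KolmogorovWidth

theorem Submodule.exists_mem_norm_sum_smul_sub_le {ι E : Type*} [Fintype ι]
    [SeminormedAddCommGroup E] [NormedSpace ℝ E] (Z : Submodule ℝ E) (v : ι → E) (c : ι → ℝ)
    {r : ℝ} (hv : ∀ i, ∃ z ∈ Z, ‖v i - z‖ ≤ r) :
    ∃ z ∈ Z, ‖∑ i, c i • v i - z‖ ≤ (∑ i, |c i|) * r := by
  choose z hzZ hz using hv
  refine ⟨∑ i, c i • z i, Z.sum_mem fun i _ => Z.smul_mem _ (hzZ i), ?_⟩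
  calc ‖∑ i, c i • v i - ∑ i, c i • z i‖ = ‖∑ i, c i • (v i - z i)‖ := by
        simp only [smul_sub, sum_sub_distrib]
    _ ≤ ∑ i, |c i| * ‖v i - z i‖ := by
        refine (norm_sum_le _ _).trans_eq (sum_congr rfl fun i _ => ?_)
        rw [norm_smul, Real.norm_eq_abs]
    _ ≤ (∑ i, |c i|) * r := by
        rw [sum_mul]
        exact sum_le_sum fun i _ => mul_le_mul_of_nonneg_left (hz i) (abs_nonneg _)

section SymmetricProjection

variable {𝕜 E ι : Type*} [RCLike 𝕜] [NormedAddCommGroup E] [InnerProductSpace 𝕜 E] [Fintype ι]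

theorem LinearMap.IsSymmetricProjection.norm_sub_apply_sq {p : E →ₗ[𝕜] E}
    (hp : p.IsSymmetricProjection) (x : E) :
    ‖x - p x‖ ^ 2 = ‖x‖ ^ 2 - RCLike.re ⟪x, p x⟫_𝕜 := by
  have hnorm : ‖p x‖ ^ 2 = RCLike.re ⟪x, p x⟫_𝕜 := by
    rw [← inner_self_eq_norm_sq (𝕜 := 𝕜), hp.isSymmetric, ← Module.End.mul_apply,
      hp.isIdempotentElem.eq]
  rw [norm_sub_sq (𝕜 := 𝕜), hnorm]
  ring

theorem IsIdempotentElem.sum_inner_apply_eq_finrank_range {p : E →ₗ[𝕜] E}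
    (hp : IsIdempotentElem p) (b : OrthonormalBasis ι 𝕜 E) :
    ∑ i, ⟪b i, p (b i)⟫_𝕜 = finrank 𝕜 (LinearMap.range p) := by
  have : FiniteDimensional 𝕜 E := b.toBasis.finiteDimensional_of_finite
  rw [← LinearMap.trace_eq_sum_inner, (LinearMap.IsIdempotentElem.isProj_range _ hp).trace]

end SymmetricProjection

theorem OrthonormalBasis.exists_sqrt_le_norm_sub {ι E : Type*} [Fintype ι] [Nonempty ι]
    [NormedAddCommGroup E] [InnerProductSpace ℝ E] (b : OrthonormalBasis ι ℝ E)
    (Z : Submodule ℝ E) [FiniteDimensional ℝ Z] {n : ℕ} (hZ : finrank ℝ Z ≤ n) :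
    ∃ i, ∀ w ∈ Z, √(1 - n / Fintype.card ι) ≤ ‖b i - w‖ := by
  set p : E →ₗ[ℝ] E := Z.starProjection.toLinearMap
  have hp : p.IsSymmetricProjection := Z.isSymmetricProjection_starProjection
  have hsum : ∑ i, ⟪b i, p (b i)⟫_ℝ ≤ ∑ _i : ι, (n / Fintype.card ι : ℝ) := by
    rw [hp.isIdempotentElem.sum_inner_apply_eq_finrank_range b, sum_const, card_univ, nsmul_eq_mul,
      mul_div_cancel₀ _ (by positivity)]
    exact_mod_cast (Z.range_starProjection ▸ hZ : finrank ℝ (LinearMap.range p) ≤ n)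
  obtain ⟨i, -, hi⟩ := exists_le_of_sum_le univ_nonempty hsum
  refine ⟨i, fun w hw => ?_⟩
  have hmin : ‖b i - p (b i)‖ ≤ ‖b i - w‖ := by
    rw [ContinuousLinearMap.coe_coe, Submodule.starProjection_minimal]
    exact ciInf_le ⟨0, Set.forall_mem_range.2 fun _ => norm_nonneg _⟩ (⟨w, hw⟩ : Z)
  refine (Real.sqrt_le_left (norm_nonneg _)).2
    (le_trans ?_ (pow_le_pow_left₀ (norm_nonneg _) hmin 2))
  rw [hp.norm_sub_apply_sq, b.norm_eq_one, one_pow, RCLike.re_to_real]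
  linarith

namespace Matrix

theorem isStarProjection_smul_conjTranspose_mul {κ ι 𝕜 : Type*} [Fintype κ] [DecidableEq κ]
    [Fintype ι] [RCLike 𝕜] {F : Matrix κ ι 𝕜} {c : ℝ} (hc : c ≠ 0) (hF : F * Fᴴ = c • 1) :
    IsStarProjection (c⁻¹ • (Fᴴ * F)) := by
  refine ⟨?_, (IsSelfAdjoint.all _).smul (isHermitian_conjTranspose_mul_self F)⟩
  calc c⁻¹ • (Fᴴ * F) * c⁻¹ • (Fᴴ * F) = (c⁻¹ * c⁻¹) • (Fᴴ * (F * Fᴴ) * F) := by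
        rw [smul_mul_smul, Matrix.mul_assoc, Matrix.mul_assoc, Matrix.mul_assoc]
    _ = c⁻¹ • (Fᴴ * F) := by
        rw [hF, Matrix.mul_smul, Matrix.mul_one, Matrix.smul_mul, smul_smul,
          inv_mul_cancel_right₀ hc]

theorem isStarProjection_of_map_algebraMap {ι 𝕜 : Type*} [Fintype ι] [RCLike 𝕜]
    {P : Matrix ι ι ℝ} (h : IsStarProjection (P.map (algebraMap ℝ 𝕜))) : IsStarProjection P := by
  have inj : Function.Injective fun M : Matrix ι ι ℝ => M.map (algebraMap ℝ 𝕜) :=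
    map_injective (algebraMap ℝ 𝕜).injective
  refine ⟨inj ?_, inj ?_⟩
  · simpa only [IsIdempotentElem, Matrix.map_mul] using h.isIdempotentElem
  · simpa only [IsSelfAdjoint, star_eq_conjTranspose,
      conjTranspose_map _ (algebraMap_star_comm (A := 𝕜))] using h.isSelfAdjoint

end Matrix

theorem ZMod.card_image_intCast_Icc {m h : ℕ} (hh : 2 * h < m) :
    #((Icc (-(h : ℤ)) h).image (Int.cast : ℤ → ZMod m)) = 2 * h + 1 := by
  rw [card_image_of_injOn, Int.card_Icc]
  · omega
  intro k hk l hl hkl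
  simp only [coe_Icc, Set.mem_Icc] at hk hl
  rw [ZMod.intCast_eq_intCast_iff_dvd_sub] at hkl
  exact (sub_eq_zero.1 (Int.eq_zero_of_abs_lt_dvd hkl (abs_lt.2 ⟨by omega, by omega⟩))).symm

theorem ZMod.exists_finset_card_eq_of_forall_neg_mem {m n : ℕ} [NeZero m] (hnm : n ≤ m) :
    ∃ T : Finset (ZMod m), (∀ k ∈ T, -k ∈ T) ∧ #T = n := by
  rcases hnm.eq_or_lt with rfl | hlt
  · exact ⟨univ, fun _ _ => mem_univ _, by simp⟩
  set A := (Icc (-(n / 2 : ℕ) : ℤ) (n / 2 : ℕ)).image (Int.cast : ℤ → ZMod m)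
  have hA : ∀ k ∈ A, -k ∈ A := by
    simp only [A, mem_image, mem_Icc]
    rintro _ ⟨k, hk, rfl⟩
    exact ⟨-k, by omega, by push_cast; rfl⟩
  have hcard : #A = 2 * (n / 2) + 1 := ZMod.card_image_intCast_Icc (by omega)
  rcases Nat.even_or_odd n with ⟨h, hn⟩ | ⟨h, hn⟩
  · refine ⟨A.erase 0, fun k hk => ?_, ?_⟩
    · rw [mem_erase] at hk ⊢
      exact ⟨neg_ne_zero.2 hk.1, hA k hk.2⟩
    · rw [card_erase_of_mem (mem_image.2 ⟨0, by rw [mem_Icc]; omega, Int.cast_zero⟩), hcard]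
      omega
  · exact ⟨A, hA, by omega⟩

section Fourier

open Matrix ZMod

variable {m : ℕ} [NeZero m]

noncomputable def partialFourierMatrix (T : Finset (ZMod m)) : Matrix T (Fin m) ℂ :=
  of fun k j => stdAddChar ((k : ZMod m) * finEquiv m j)

theorem partialFourierMatrix_mul_conjTranspose (T : Finset (ZMod m)) :
    partialFourierMatrix T * (partialFourierMatrix T)ᴴ = (m : ℝ) • 1 := by
  ext k l
  have hsum : ∑ j : Fin m, stdAddChar (finEquiv m j * (k.1 - l.1)) =
      if k = l then (m : ℂ) else 0 := by
    have := AddChar.sum_mulShift (k.1 - l.1) (isPrimitive_stdAddChar m)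
    push_cast [ZMod.card, sub_eq_zero, ← Subtype.ext_iff] at this
    exact ((finEquiv m).toEquiv.sum_comp fun x => stdAddChar (x * (k.1 - l.1))).trans this
  simp only [mul_apply, conjTranspose_apply, partialFourierMatrix, of_apply, RCLike.star_def,
    ← AddChar.map_neg_eq_conj, ← AddChar.map_add_eq_mul]
  simp_rw [show ∀ j, k.1 * finEquiv m j + -(l.1 * finEquiv m j) =
    finEquiv m j * (k.1 - l.1) from fun j => by ring]
  rw [hsum, Matrix.smul_apply, one_apply]
  split_ifs <;> simp

theorem conjTranspose_mul_partialFourierMatrix_apply (T : Finset (ZMod m)) (i j : Fin m) :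
    ((partialFourierMatrix T)ᴴ * partialFourierMatrix T) i j =
      ∑ k ∈ T, stdAddChar (k * (finEquiv m j - finEquiv m i)) := by
  simp only [mul_apply, conjTranspose_apply, partialFourierMatrix, of_apply, RCLike.star_def,
    ← AddChar.map_neg_eq_conj, ← AddChar.map_add_eq_mul]
  rw [← T.sum_coe_sort]
  exact Fintype.sum_congr _ _ fun k => by ring_nf

theorem star_conjTranspose_mul_partialFourierMatrix_apply {T : Finset (ZMod m)}
    (hT : ∀ k ∈ T, -k ∈ T) (i j : Fin m) :
    star (((partialFourierMatrix T)ᴴ * partialFourierMatrix T) i j) =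
      ((partialFourierMatrix T)ᴴ * partialFourierMatrix T) i j := by
  rw [conjTranspose_mul_partialFourierMatrix_apply, star_sum]
  refine sum_nbij' Neg.neg Neg.neg hT hT (fun _ _ => neg_neg _) (fun _ _ => neg_neg _)
    fun k _ => ?_
  rw [RCLike.star_def, ← AddChar.map_neg_eq_conj, neg_mul_eq_neg_mul]

theorem Matrix.exists_isStarProjection_diag_eq {n : ℕ} (hnm : n ≤ m) :
    ∃ P : Matrix (Fin m) (Fin m) ℝ, IsStarProjection P ∧ ∀ i, P i i = n / m := by
  obtain ⟨T, hT, rfl⟩ := ZMod.exists_finset_card_eq_of_forall_neg_mem (m := m) hnm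
  set H := (m : ℝ)⁻¹ • ((partialFourierMatrix T)ᴴ * partialFourierMatrix T) with hH_def
  have hH : IsStarProjection H := isStarProjection_smul_conjTranspose_mul
    (Nat.cast_ne_zero.2 (NeZero.ne m)) (partialFourierMatrix_mul_conjTranspose T)
  have hreal : (H.map Complex.re).map (algebraMap ℝ ℂ) = H := by
    ext i j
    have hstar : star (H i j) = H i j := by
      rw [hH_def, Matrix.smul_apply, star_smul, star_trivial,
        star_conjTranspose_mul_partialFourierMatrix_apply hT]
    exact Complex.conj_eq_iff_re.1 hstar
  refine ⟨H.map Complex.re, isStarProjection_of_map_algebraMap (hreal ▸ hH), fun i => ?_⟩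
  simp [H, conjTranspose_mul_partialFourierMatrix_apply, inv_mul_eq_div]

end Fourier

theorem EuclideanSpace.exists_submodule_forall_norm_single_sub_le {m n : ℕ} [NeZero m]
    (hnm : n ≤ m) :
    ∃ Z : Submodule ℝ (EuclideanSpace ℝ (Fin m)), finrank ℝ Z ≤ n ∧
      ∀ i, ∃ z ∈ Z, ‖EuclideanSpace.single i (1 : ℝ) - z‖ ≤ √(1 - n / m) := by
  obtain ⟨P, hP, hdiag⟩ := Matrix.exists_isStarProjection_diag_eq hnm
  set p : EuclideanSpace ℝ (Fin m) →ₗ[ℝ] EuclideanSpace ℝ (Fin m) :=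
    (Matrix.toEuclideanCLM (𝕜 := ℝ) P).toLinearMap
  have hp : p.IsSymmetricProjection :=
    ContinuousLinearMap.isStarProjection_iff_isSymmetricProjection.1 (hP.map _)
  have hpe : ∀ i, ⟪single i 1, p (single i 1)⟫_ℝ = n / m := fun i => by
    simp [p, ContinuousLinearMap.coe_coe, Matrix.inner_toEuclideanCLM, hdiag]
  refine ⟨LinearMap.range p, ?_, fun i => ⟨p (single i 1), LinearMap.mem_range_self p _, ?_⟩⟩
  · have hrank := hp.isIdempotentElem.sum_inner_apply_eq_finrank_range (basisFun (Fin m) ℝ)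
    simp only [basisFun_apply, hpe, sum_const, card_univ, Fintype.card_fin, nsmul_eq_mul,
      mul_div_cancel₀ _ (NeZero.ne (m : ℝ))] at hrank
    exact_mod_cast hrank.ge
  · rw [← Real.sqrt_sq (norm_nonneg _), hp.norm_sub_apply_sq, hpe]
    simp

/-- For `n ≤ m`, the Kolmogorov n-width of the unit ball of `ℓ_1^m` as a subset of
`ℓ_2^m` equals `√(1 - n/m)`. -/
theorem kolWidth_l1Ball_in_l2 (m n : ℕ) (hm : 0 < m) (hnm : n ≤ m) :
    kolWidth n {x : EuclideanSpace ℝ (Fin m) | ∑ i, |x i| ≤ 1} =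
      ENNReal.ofReal (Real.sqrt (1 - (n : ℝ) / m)) := by
  have : NeZero m := ⟨hm.ne'⟩
  set b := EuclideanSpace.basisFun (Fin m) ℝ
  apply le_antisymm
  · obtain ⟨Z, hZ, hnear⟩ := EuclideanSpace.exists_submodule_forall_norm_single_sub_le hnm
    refine kolWidth_le_ofReal Z hZ fun x hx => ?_
    obtain ⟨z, hz, hxz⟩ := Z.exists_mem_norm_sum_smul_sub_le _ (fun i => x i) hnear
    refine ⟨z, hz, ?_⟩
    calc ‖x - z‖ = ‖∑ i, x i • EuclideanSpace.single i (1 : ℝ) - z‖ := by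
          conv_lhs => rw [← b.sum_repr x]
          simp [b]
      _ ≤ (∑ i, |x i|) * √(1 - n / m) := hxz
      _ ≤ √(1 - n / m) := mul_le_of_le_one_left (Real.sqrt_nonneg _) hx
  · refine ofReal_le_kolWidth fun Z _ hZ => ?_
    obtain ⟨i, hi⟩ := b.exists_sqrt_le_norm_sub Z hZ
    refine ⟨b i, ?_, by simpa using hi⟩
    simp [b, apply_ite]
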